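/- Let G be a finite abelian group and S a subgroup of G. For every δ > 0 there exists ε > 0 such that for every finite output alphabet Y and every channel (G, Y, W): if Z_d(W) > 1 − ε for all d ∈ S and Z_d(W) < ε for all d ∈ G \ S, then | I⁰(W) − log₂(|G|/|S|) | < δ. -/

import Mathlib

/-!
Write `q = |G|`, `s = |S|` and `Q` for the output distribution, so that `I⁰(W)` is the average
over `x` of the relative entropy `D(W_x ‖ Q)`. Since every pairwise Bhattacharyya coefficient lies
in `[0, 1]`, the hypotheses on the averages `Z_d(W)` give `Z(W_x, W_{x+d}) ≥ 1 - qε` for `d ∈ S`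
and `Z(W_x, W_{x+d}) ≤ qε` for `d ∉ S`.

Upper bound: the average `A` of `W` over the coset `x + S` satisfies `A ≤ (q/s) Q`, `W_x ≤ s A`
and `Σ √(W_x A) ≥ 1 - qε`. With `log t ≤ t - 1` one gets
`p log(p/a) ≤ p - a + (2√(p/a) + 1)(√p - √a)²`, so `D(W_x ‖ Q) ≤ log(q/s) + O(√s · qε)`.

Lower bound: `D(P ‖ Q) ≥ -2 log Σ √(P Q)`. Splitting `Q` into its part over `x + S`
(Cauchy–Schwarz bounds its contribution by `√(s/q)`) and the rest (pairs with small coefficient)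
gives `Σ √(W_x Q) ≤ √(s/q) + √q · qε`, whence `D(W_x ‖ Q) ≥ log(q/s) - O(√q · qε)`.
-/

open Finset

/-- Bhattacharyya distance between two input symbols. -/
noncomputable def Zpair {G Y : Type} [Fintype Y] (W : G → Y → ℝ) (x x' : G) : ℝ :=
  ∑ y : Y, Real.sqrt (W x y * W x' y)

/-- `Z_d(W) = (1/q)·Σ_{x∈G} Z(W_{x,x+d})`. -/
noncomputable def Zd {G Y : Type} [Fintype G] [Fintype Y] [Add G]
    (W : G → Y → ℝ) (d : G) : ℝ :=
  (1 / (Fintype.card G : ℝ)) * ∑ x : G, Zpair W x (x + d)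

/-- The symmetric capacity `I⁰(W)` of a channel `W` with uniform input. -/
noncomputable def symCap {X Y : Type} [Fintype X] [Fintype Y] (W : X → Y → ℝ) : ℝ :=
  ∑ x, ∑ y, (1 / (Fintype.card X : ℝ)) * W x y *
    Real.logb 2 (W x y / ((1 / (Fintype.card X : ℝ)) * ∑ x' : X, W x' y))

open Real

section Distributions

variable {α ι : Type*} [Fintype α]

noncomputable def bhattacharyya (p q : α → ℝ) : ℝ :=
  ∑ y, √(p y * q y)

noncomputable def relEntropy (p q : α → ℝ) : ℝ :=
  ∑ y, p y * log (p y / q y)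

lemma sqrt_add_le_sqrt_add_sqrt {a b : ℝ} (ha : 0 ≤ a) (hb : 0 ≤ b) :
    √(a + b) ≤ √a + √b := by
  rw [sqrt_le_iff]
  refine ⟨by positivity, ?_⟩
  nlinarith [sq_sqrt ha, sq_sqrt hb, mul_nonneg (sqrt_nonneg a) (sqrt_nonneg b)]

lemma sqrt_sum_le_sum_sqrt (T : Finset ι) {f : ι → ℝ} (hf : ∀ i ∈ T, 0 ≤ f i) :
    √(∑ i ∈ T, f i) ≤ ∑ i ∈ T, √(f i) :=
  calc √(∑ i ∈ T, f i) = √(∑ i ∈ T, √(f i) ^ 2) := by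
        rw [sum_congr rfl fun i hi => sq_sqrt (hf i hi)]
    _ ≤ √((∑ i ∈ T, √(f i)) ^ 2) :=
        sqrt_le_sqrt (sum_sq_le_sq_sum_of_nonneg fun i _ => sqrt_nonneg _)
    _ = ∑ i ∈ T, √(f i) := sqrt_sq (sum_nonneg fun i _ => sqrt_nonneg _)

lemma bhattacharyya_le_sqrt_mul_sqrt {p q : α → ℝ} (hp : ∀ y, 0 ≤ p y) (hq : ∀ y, 0 ≤ q y) :
    bhattacharyya p q ≤ √(∑ y, p y) * √(∑ y, q y) := by
  simpa only [bhattacharyya, sqrt_mul (hp _)] using sum_sqrt_mul_sqrt_le univ hp hq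

lemma bhattacharyya_const_mul (p q : α → ℝ) {c : ℝ} (hc : 0 ≤ c) :
    bhattacharyya p (fun y => c * q y) = √c * bhattacharyya p q := by
  simp only [bhattacharyya, mul_sum]
  exact sum_congr rfl fun y _ => by rw [mul_left_comm, sqrt_mul hc]

lemma bhattacharyya_add_le {p q r : α → ℝ} (hp : ∀ y, 0 ≤ p y) (hq : ∀ y, 0 ≤ q y)
    (hr : ∀ y, 0 ≤ r y) :
    bhattacharyya p (fun y => q y + r y) ≤ bhattacharyya p q + bhattacharyya p r := by
  simp only [bhattacharyya, ← sum_add_distrib, mul_add]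
  exact sum_le_sum fun y _ =>
    sqrt_add_le_sqrt_add_sqrt (mul_nonneg (hp y) (hq y)) (mul_nonneg (hp y) (hr y))

lemma bhattacharyya_sum_le {p : α → ℝ} (hp : ∀ y, 0 ≤ p y) {w : ι → α → ℝ} (hw : ∀ i y, 0 ≤ w i y)
    (T : Finset ι) :
    bhattacharyya p (fun y => ∑ i ∈ T, w i y) ≤ ∑ i ∈ T, bhattacharyya p (w i) := by
  simp only [bhattacharyya, mul_sum]
  rw [sum_comm]
  exact sum_le_sum fun y _ => sqrt_sum_le_sum_sqrt T fun i _ => mul_nonneg (hp y) (hw i y)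

lemma sum_bhattacharyya_le {p : α → ℝ} (hp : ∀ y, 0 ≤ p y) {w : ι → α → ℝ} (hw : ∀ i y, 0 ≤ w i y)
    (T : Finset ι) :
    ∑ i ∈ T, bhattacharyya p (w i) ≤ √(#T) * bhattacharyya p (fun y => ∑ i ∈ T, w i y) := by
  simp only [bhattacharyya]
  rw [sum_comm, mul_sum]
  refine sum_le_sum fun y _ => ?_
  have hcs := sum_sqrt_mul_sqrt_le T (f := fun _ => p y) (g := fun i => w i y)
    (fun _ => hp y) (fun i => hw i y)
  simp only [sum_const, nsmul_eq_mul] at hcs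
  simp only [sqrt_mul (hp y), sqrt_mul (Nat.cast_nonneg (α := ℝ) #T)] at hcs ⊢
  linarith

lemma sum_sq_sqrt_sub_sqrt {p q : α → ℝ} (hp : ∀ y, 0 ≤ p y) (hq : ∀ y, 0 ≤ q y) :
    ∑ y, (√(p y) - √(q y)) ^ 2 = ∑ y, p y + ∑ y, q y - 2 * bhattacharyya p q := by
  simp only [bhattacharyya, mul_sum, ← sum_add_distrib, ← sum_sub_distrib]
  refine sum_congr rfl fun y _ => ?_
  rw [sub_sq, sq_sqrt (hp y), sq_sqrt (hq y), sqrt_mul (hp y)]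
  ring

lemma mul_log_div_le {p a : ℝ} (hp : 0 < p) (ha : 0 < a) :
    p * log (p / a) ≤ p - a + (2 * √(p / a) + 1) * (√p - √a) ^ 2 := by
  obtain ⟨u, hu, rfl⟩ : ∃ u, 0 < u ∧ p = u ^ 2 := ⟨√p, sqrt_pos.2 hp, (sq_sqrt hp.le).symm⟩
  obtain ⟨v, hv, rfl⟩ : ∃ v, 0 < v ∧ a = v ^ 2 := ⟨√a, sqrt_pos.2 ha, (sq_sqrt ha.le).symm⟩
  have hlog := log_le_sub_one_of_pos (div_pos hu hv)
  rw [← div_pow, sqrt_sq (div_pos hu hv).le, sqrt_sq hu.le, sqrt_sq hv.le, log_pow]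
  have key : u ^ 2 * (2 * (u / v - 1)) = u ^ 2 - v ^ 2 + (2 * (u / v) + 1) * (u - v) ^ 2 := by
    field_simp
    ring
  push_cast
  linear_combination 2 * mul_le_mul_of_nonneg_left hlog (sq_nonneg u) + key

lemma le_mul_log_div {p q b : ℝ} (hp : 0 < p) (hq : 0 < q) (hb : 0 < b) :
    p * (2 - 2 * log b) - 2 * √(p * q) / b ≤ p * log (p / q) := by
  obtain ⟨u, hu, rfl⟩ : ∃ u, 0 < u ∧ p = u ^ 2 := ⟨√p, sqrt_pos.2 hp, (sq_sqrt hp.le).symm⟩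
  obtain ⟨v, hv, rfl⟩ : ∃ v, 0 < v ∧ q = v ^ 2 := ⟨√q, sqrt_pos.2 hq, (sq_sqrt hq.le).symm⟩
  have hlog := log_le_sub_one_of_pos (div_pos hv (mul_pos hu hb))
  rw [log_div hv.ne' (mul_pos hu hb).ne', log_mul hu.ne' hb.ne'] at hlog
  rw [← div_pow, ← mul_pow, sqrt_sq (mul_pos hu hv).le, log_pow, log_div hu.ne' hv.ne']
  have key : u ^ 2 * (v / (u * b)) = u * v / b := by
    field_simp
  push_cast
  linear_combination 2 * mul_le_mul_of_nonneg_left hlog (sq_nonneg u) + 2 * key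

lemma sum_sum_eq_card {V : ι → α → ℝ} (hV1 : ∀ i, ∑ y, V i y = 1) (T : Finset ι) :
    ∑ y, ∑ i ∈ T, V i y = #T := by
  rw [sum_comm]
  simp [hV1]

theorem neg_two_mul_log_le_relEntropy {p q : α → ℝ} (hp : ∀ y, 0 ≤ p y) (hp1 : ∑ y, p y = 1)
    (hpq : ∀ y, 0 < p y → 0 < q y) {b : ℝ} (hb : bhattacharyya p q ≤ b) :
    -2 * log b ≤ relEntropy p q := by
  obtain ⟨y₀, hy₀⟩ : ∃ y, 0 < p y := by
    by_contra! h
    linarith [sum_nonpos fun y (_ : y ∈ univ) => h y]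
  have hB : 0 < bhattacharyya p q :=
    sum_pos' (fun y _ => sqrt_nonneg _) ⟨y₀, mem_univ _, sqrt_pos.2 (mul_pos hy₀ (hpq y₀ hy₀))⟩
  -- the tangent line of `log` at `bhattacharyya p q`, summed against `p`
  have htangent : ∀ y, p y * (2 - 2 * log (bhattacharyya p q)) -
      2 * √(p y * q y) / bhattacharyya p q ≤ p y * log (p y / q y) := by
    intro y
    rcases (hp y).eq_or_lt with h | h
    · simp [← h]
    · exact le_mul_log_div h (hpq y h) hB
  have hsum := sum_le_sum fun y (_ : y ∈ univ) => htangent y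
  rw [sum_sub_distrib, ← sum_mul, hp1, ← sum_div, ← mul_sum, ← bhattacharyya,
    mul_div_assoc, div_self hB.ne'] at hsum
  have := log_le_log hB hb
  rw [relEntropy]
  linarith

theorem relEntropy_le {p a q : α → ℝ} (hp : ∀ y, 0 ≤ p y) (ha : ∀ y, 0 ≤ a y)
    (hq : ∀ y, 0 ≤ q y) (hp1 : ∑ y, p y = 1) (ha1 : ∑ y, a y = 1) {s k : ℝ}
    (hpa : ∀ y, p y ≤ s * a y) (haq : ∀ y, a y ≤ k * q y) :
    relEntropy p q ≤ log k + 2 * (2 * √s + 1) * (1 - bhattacharyya p a) := by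
  have hterm : ∀ y, p y * log (p y / q y) ≤
      p y * log k + (p y - a y + (2 * √s + 1) * (√(p y) - √(a y)) ^ 2) := by
    intro y
    rcases (hp y).eq_or_lt with h | hpy
    · simp only [← h, zero_mul, sqrt_zero, zero_sub, neg_sq, sq_sqrt (ha y)]
      nlinarith [sqrt_nonneg s, ha y]
    have hay : 0 < a y := (ha y).lt_of_ne fun h => by simpa [← h] using hpy.trans_le (hpa y)
    have hqy : 0 < q y := (hq y).lt_of_ne fun h => by simpa [← h] using hay.trans_le (haq y)
    have hk : 0 < k := pos_of_mul_pos_left (hay.trans_le (haq y)) (hq y)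
    have hlog : log (p y / q y) ≤ log k + log (p y / a y) := by
      rw [← log_mul hk.ne' (div_pos hpy hay).ne']
      refine log_le_log (div_pos hpy hqy) ?_
      rw [← mul_div_assoc, div_le_div_iff₀ hqy hay]
      nlinarith [mul_le_mul_of_nonneg_left (haq y) hpy.le]
    have hratio : √(p y / a y) ≤ √s := sqrt_le_sqrt ((div_le_iff₀ hay).2 (hpa y))
    nlinarith [mul_le_mul_of_nonneg_left hlog hpy.le, mul_log_div_le hpy hay,
      mul_le_mul_of_nonneg_right hratio (sq_nonneg (√(p y) - √(a y)))]
  have hsum := sum_le_sum fun y (_ : y ∈ univ) => hterm y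
  rw [sum_add_distrib, ← sum_mul, sum_add_distrib, sum_sub_distrib, ← mul_sum,
    sum_sq_sqrt_sub_sqrt hp ha, hp1, ha1] at hsum
  rw [relEntropy]
  linarith

end Distributions

section Channel

variable {X Y : Type} {W : X → Y → ℝ}

noncomputable def outputDist [Fintype X] (W : X → Y → ℝ) (y : Y) : ℝ :=
  1 / (Fintype.card X : ℝ) * ∑ x, W x y

lemma outputDist_nonneg [Fintype X] (hW0 : ∀ x y, 0 ≤ W x y) (y : Y) : 0 ≤ outputDist W y :=
  mul_nonneg (by positivity) (sum_nonneg fun x _ => hW0 x y)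

lemma outputDist_pos [Fintype X] (hW0 : ∀ x y, 0 ≤ W x y) (x : X) {y : Y} (hxy : 0 < W x y) :
    0 < outputDist W y :=
  mul_pos (one_div_pos.2 (Nat.cast_pos.2 (Fintype.card_pos_iff.2 ⟨x⟩))) (hxy.trans_le
    (single_le_sum (f := fun x => W x y) (fun x _ => hW0 x y) (mem_univ x)))

variable [Fintype Y]

lemma Zpair_eq_bhattacharyya (W : X → Y → ℝ) (x x' : X) :
    Zpair W x x' = bhattacharyya (W x) (W x') :=
  rfl

lemma Zpair_le_one (hW0 : ∀ x y, 0 ≤ W x y) (hW1 : ∀ x, ∑ y, W x y = 1) (x x' : X) :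
    Zpair W x x' ≤ 1 := by
  simpa [Zpair_eq_bhattacharyya, hW1] using bhattacharyya_le_sqrt_mul_sqrt (hW0 x) (hW0 x')

variable [Fintype X]

lemma symCap_eq_sum_relEntropy (W : X → Y → ℝ) :
    symCap W = (∑ x, relEntropy (W x) (outputDist W)) / Fintype.card X / log 2 := by
  simp only [symCap, relEntropy, outputDist, logb, sum_div]
  exact sum_congr rfl fun x _ => sum_congr rfl fun y _ => by ring

lemma symCap_le_of_forall_relEntropy_le [Nonempty X] {c : ℝ}
    (h : ∀ x, relEntropy (W x) (outputDist W) ≤ c) : symCap W ≤ c / log 2 := by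
  have hsum : ∑ x, relEntropy (W x) (outputDist W) ≤ Fintype.card X * c := by
    simpa using sum_le_sum fun x (_ : x ∈ univ) => h x
  rw [symCap_eq_sum_relEntropy, div_le_div_iff_of_pos_right (log_pos one_lt_two)]
  exact (div_le_iff₀' (Nat.cast_pos.2 Fintype.card_pos)).2 hsum

lemma le_symCap_of_forall_le_relEntropy [Nonempty X] {c : ℝ}
    (h : ∀ x, c ≤ relEntropy (W x) (outputDist W)) : c / log 2 ≤ symCap W := by
  have hsum : Fintype.card X * c ≤ ∑ x, relEntropy (W x) (outputDist W) := by
    simpa using sum_le_sum fun x (_ : x ∈ univ) => h x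
  rw [symCap_eq_sum_relEntropy, div_le_div_iff_of_pos_right (log_pos one_lt_two)]
  exact (le_div_iff₀' (Nat.cast_pos.2 Fintype.card_pos)).2 hsum

variable [Add X]

lemma card_mul_Zd (W : X → Y → ℝ) (d : X) [Nonempty X] :
    Fintype.card X * Zd W d = ∑ x, Zpair W x (x + d) := by
  rw [Zd, ← mul_assoc, mul_one_div_cancel (Nat.cast_pos.2 Fintype.card_pos).ne', one_mul]

lemma Zpair_le_card_mul_Zd (W : X → Y → ℝ) (x d : X) :
    Zpair W x (x + d) ≤ Fintype.card X * Zd W d := by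
  have : Nonempty X := ⟨x⟩
  rw [card_mul_Zd]
  exact single_le_sum (f := fun x => Zpair W x (x + d))
    (fun x _ => sum_nonneg fun y _ => sqrt_nonneg _) (mem_univ x)

lemma one_sub_Zpair_le (hW0 : ∀ x y, 0 ≤ W x y) (hW1 : ∀ x, ∑ y, W x y = 1) (x d : X) :
    1 - Zpair W x (x + d) ≤ Fintype.card X * (1 - Zd W d) := by
  have : Nonempty X := ⟨x⟩
  rw [mul_one_sub, card_mul_Zd, ← card_univ, ← nsmul_one, ← sum_const, ← sum_sub_distrib]
  exact single_le_sum (f := fun x => 1 - Zpair W x (x + d))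
    (fun x _ => sub_nonneg.2 (Zpair_le_one hW0 hW1 _ _)) (mem_univ x)

end Channel

section Subgroup

variable {G Y : Type} [Fintype G] [AddCommGroup G] {W : G → Y → ℝ}

lemma outputDist_eq_sum_add (W : G → Y → ℝ) (x : G) (y : Y) :
    outputDist W y = 1 / (Fintype.card G : ℝ) * ∑ d, W (x + d) y := by
  rw [outputDist, ← Equiv.sum_comp (Equiv.addLeft x)]
  rfl

variable (S : AddSubgroup G) [DecidablePred (· ∈ S)]

lemma card_filter_mem_addSubgroup : #(univ.filter (· ∈ S)) = Nat.card S := by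
  rw [← Fintype.card_subtype, Nat.card_eq_fintype_card]

noncomputable def cosetAvg (W : G → Y → ℝ) (x : G) : Y → ℝ :=
  fun y => 1 / (Nat.card S : ℝ) * ∑ d ∈ univ.filter (· ∈ S), W (x + d) y

lemma cosetAvg_nonneg (hW0 : ∀ x y, 0 ≤ W x y) (x : G) (y : Y) : 0 ≤ cosetAvg S W x y :=
  mul_nonneg (by positivity) (sum_nonneg fun d _ => hW0 _ y)

lemma le_card_mul_cosetAvg (hW0 : ∀ x y, 0 ≤ W x y) (x : G) (y : Y) :
    W x y ≤ Nat.card S * cosetAvg S W x y := by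
  rw [cosetAvg, ← mul_assoc, mul_one_div_cancel (Nat.cast_pos.2 Nat.card_pos).ne', one_mul]
  simpa using single_le_sum (f := fun d => W (x + d) y) (fun d _ => hW0 _ y)
    (mem_filter.2 ⟨mem_univ 0, S.zero_mem⟩)

lemma cosetAvg_le (hW0 : ∀ x y, 0 ≤ W x y) (x : G) (y : Y) :
    cosetAvg S W x y ≤ Fintype.card G / Nat.card S * outputDist W y :=
  calc cosetAvg S W x y ≤ 1 / (Nat.card S : ℝ) * ∑ d, W (x + d) y := by
        rw [cosetAvg]
        gcongr
        · exact fun d _ _ => hW0 _ y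
        · exact subset_univ _
    _ = Fintype.card G / Nat.card S * outputDist W y := by
        rw [outputDist_eq_sum_add W x]
        field_simp

variable [Fintype Y]

lemma sum_cosetAvg (hW1 : ∀ x, ∑ y, W x y = 1) (x : G) : ∑ y, cosetAvg S W x y = 1 := by
  simp only [cosetAvg]
  rw [← mul_sum, sum_sum_eq_card (fun d => hW1 (x + d)),
    card_filter_mem_addSubgroup, one_div_mul_cancel (Nat.cast_pos.2 Nat.card_pos).ne']

lemma one_sub_le_bhattacharyya_cosetAvg (hW0 : ∀ x y, 0 ≤ W x y) {x : G} {η : ℝ}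
    (hin : ∀ d ∈ S, 1 - η ≤ Zpair W x (x + d)) : 1 - η ≤ bhattacharyya (W x) (cosetAvg S W x) := by
  set T := univ.filter (· ∈ S)
  have hT : (#T : ℝ) = Nat.card S := congrArg Nat.cast (card_filter_mem_addSubgroup S)
  have hs : (0 : ℝ) < Nat.card S := Nat.cast_pos.2 Nat.card_pos
  calc 1 - η = 1 / (Nat.card S : ℝ) * ∑ _d ∈ T, (1 - η) := by
        rw [sum_const, nsmul_eq_mul, hT]
        field_simp
    _ ≤ 1 / (Nat.card S : ℝ) * ∑ d ∈ T, Zpair W x (x + d) := by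
        gcongr with d hd
        exact hin d (mem_filter.1 hd).2
    _ ≤ 1 / (Nat.card S : ℝ) * (√(Nat.card S) *
          bhattacharyya (W x) (fun y => ∑ d ∈ T, W (x + d) y)) := by
        gcongr
        rw [← hT]
        exact sum_bhattacharyya_le (hW0 x) (fun d => hW0 (x + d)) T
    _ = bhattacharyya (W x) (cosetAvg S W x) := by
        unfold cosetAvg
        rw [bhattacharyya_const_mul _ _ (by positivity), ← mul_assoc,
          one_div_mul_eq_div, sqrt_div_self', one_div, one_div, sqrt_inv]

lemma bhattacharyya_outputDist_le (hW0 : ∀ x y, 0 ≤ W x y) (hW1 : ∀ x, ∑ y, W x y = 1)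
    {x : G} {η : ℝ} (hη : 0 ≤ η) (hout : ∀ d ∉ S, Zpair W x (x + d) ≤ η) :
    bhattacharyya (W x) (outputDist W) ≤
      √(Nat.card S / Fintype.card G) + √(Fintype.card G) * η := by
  have hsplit : outputDist W = fun y => 1 / (Fintype.card G : ℝ) * ∑ d ∈ univ.filter (· ∈ S),
      W (x + d) y + 1 / (Fintype.card G : ℝ) * ∑ d ∈ univ.filter (· ∉ S), W (x + d) y := by
    funext y
    rw [outputDist_eq_sum_add W x, ← mul_add, sum_filter_add_sum_filter_not]
  have hpart : ∀ (P : G → Prop) [DecidablePred P] (y : Y),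
      0 ≤ 1 / (Fintype.card G : ℝ) * ∑ d ∈ univ.filter P, W (x + d) y :=
    fun P _ y => mul_nonneg (by positivity) (sum_nonneg fun d _ => hW0 _ y)
  rw [hsplit]
  refine (bhattacharyya_add_le (hW0 x) (hpart _) (hpart _)).trans (add_le_add ?_ ?_)
  · refine (bhattacharyya_le_sqrt_mul_sqrt (hW0 x) (hpart _)).trans_eq ?_
    rw [hW1, ← mul_sum, sum_sum_eq_card (fun d => hW1 (x + d)), card_filter_mem_addSubgroup,
      sqrt_one, one_mul, one_div_mul_eq_div]
  · rw [bhattacharyya_const_mul _ _ (by positivity)]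
    calc √(1 / (Fintype.card G : ℝ)) *
          bhattacharyya (W x) (fun y => ∑ d ∈ univ.filter (· ∉ S), W (x + d) y)
        ≤ √(1 / (Fintype.card G : ℝ)) * ∑ d ∈ univ.filter (· ∉ S), Zpair W x (x + d) := by
          gcongr
          exact bhattacharyya_sum_le (hW0 x) (fun d => hW0 (x + d)) _
      _ ≤ √(1 / (Fintype.card G : ℝ)) * (Fintype.card G * η) := by
          gcongr
          calc ∑ d ∈ univ.filter (· ∉ S), Zpair W x (x + d)
              ≤ #(univ.filter (· ∉ S)) • η :=
                sum_le_card_nsmul _ _ _ fun d hd => hout d (mem_filter.1 hd).2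
            _ ≤ Fintype.card G * η := by
                rw [nsmul_eq_mul]
                gcongr
                exact_mod_cast card_le_univ _
      _ = √(Fintype.card G) * η := by
          rw [← mul_assoc, one_div, sqrt_inv, inv_mul_eq_div, div_sqrt]

end Subgroup

section SymmetricCapacity

variable {G Y : Type} [Fintype G] [AddCommGroup G] [Fintype Y] {W : G → Y → ℝ}
  (S : AddSubgroup G)

theorem symCap_le_of_lt_Zd (S : AddSubgroup G) (hW0 : ∀ x y, 0 ≤ W x y)
    (hW1 : ∀ x, ∑ y, W x y = 1) {ε : ℝ} (hin : ∀ d ∈ S, 1 - ε < Zd W d) :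
    symCap W ≤ (log (Fintype.card G / Nat.card S) +
      2 * (2 * √(Nat.card S) + 1) * (Fintype.card G * ε)) / log 2 :=
  by
  classical
  have hq : (0 : ℝ) < Fintype.card G := Nat.cast_pos.2 Fintype.card_pos
  refine symCap_le_of_forall_relEntropy_le fun x => ?_
  have hpair : ∀ d ∈ S, 1 - Fintype.card G * ε ≤ Zpair W x (x + d) := fun d hd => by
    linarith [one_sub_Zpair_le hW0 hW1 x d, mul_lt_mul_of_pos_left (sub_lt_comm.1 (hin d hd)) hq]
  calc relEntropy (W x) (outputDist W)
      ≤ log (Fintype.card G / Nat.card S) + 2 * (2 * √(Nat.card S) + 1) *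
          (1 - bhattacharyya (W x) (cosetAvg S W x)) :=
        relEntropy_le (hW0 x) (cosetAvg_nonneg S hW0 x) (outputDist_nonneg hW0) (hW1 x)
          (sum_cosetAvg S hW1 x) (le_card_mul_cosetAvg S hW0 x) (cosetAvg_le S hW0 x)
    _ ≤ _ := by
        gcongr
        linarith [one_sub_le_bhattacharyya_cosetAvg S hW0 hpair]

theorem le_symCap_of_Zd_lt (S : AddSubgroup G) (hW0 : ∀ x y, 0 ≤ W x y)
    (hW1 : ∀ x, ∑ y, W x y = 1) {ε : ℝ} (hε : 0 ≤ ε) (hout : ∀ d ∉ S, Zd W d < ε) :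
    -2 * log (√(Nat.card S / Fintype.card G) + √(Fintype.card G) * (Fintype.card G * ε)) /
      log 2 ≤ symCap W :=
  by
  classical
  have hq : (0 : ℝ) < Fintype.card G := Nat.cast_pos.2 Fintype.card_pos
  refine le_symCap_of_forall_le_relEntropy fun x =>
    neg_two_mul_log_le_relEntropy (hW0 x) (hW1 x) (fun y => outputDist_pos hW0 x) ?_
  refine bhattacharyya_outputDist_le S hW0 hW1 (by positivity) fun d hd => ?_
  linarith [Zpair_le_card_mul_Zd W x d, mul_lt_mul_of_pos_left (hout d hd) hq]

end SymmetricCapacity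

lemma exists_pos_lt_and_lt_of_continuousAt {f g : ℝ → ℝ} {a δ : ℝ} (hf : ContinuousAt f 0)
    (hg : ContinuousAt g 0) (hf0 : f 0 = a) (hg0 : g 0 = a) (hδ : 0 < δ) :
    ∃ ε > 0, f ε < a + δ ∧ a - δ < g ε := by
  have hf' := hf.eventually (gt_mem_nhds (show f 0 < a + δ by linarith))
  have hg' := hg.eventually (lt_mem_nhds (show a - δ < g 0 by linarith))
  obtain ⟨ε, ⟨h₁, h₂⟩, hε⟩ := (((hf'.and hg').filter_mono nhdsWithin_le_nhds).and
    (self_mem_nhdsWithin (s := Set.Ioi (0 : ℝ)))).exists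
  exact ⟨ε, hε, h₁, h₂⟩

/-- if `Z_d(W)` is close to `1` on a subgroup `S` and close to `0` off `S`,
then the symmetric capacity is close to `log₂(|G|/|S|)`. -/
theorem symCap_close_to_log_index
    {G : Type} [Fintype G] [AddCommGroup G] (S : AddSubgroup G)
    (δ : ℝ) (hδ : 0 < δ) :
    ∃ ε : ℝ, 0 < ε ∧
      ∀ (Y : Type) (_ : Fintype Y) (W : G → Y → ℝ),
        (∀ x y, 0 ≤ W x y) → (∀ x, ∑ y, W x y = 1) →
        (∀ d ∈ S, Zd W d > 1 - ε) →
        (∀ d ∉ S, Zd W d < ε) →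
        |symCap W - Real.logb 2 ((Fintype.card G : ℝ) / (Nat.card S : ℝ))| < δ := by
  set q : ℝ := (Fintype.card G : ℝ)
  set s : ℝ := (Nat.card S : ℝ)
  have hq : 0 < q := Nat.cast_pos.2 Fintype.card_pos
  have hs : 0 < s := Nat.cast_pos.2 Nat.card_pos
  have hlower : -2 * log (√(s / q) + √q * (q * 0)) / log 2 = logb 2 (q / s) := by
    rw [mul_zero, mul_zero, add_zero, log_sqrt (div_pos hs hq).le, logb, ← inv_div s q, log_inv]
    ring
  obtain ⟨ε, hε, hup, hlo⟩ := exists_pos_lt_and_lt_of_continuousAt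
    (f := fun ε => (log (q / s) + 2 * (2 * √s + 1) * (q * ε)) / log 2)
    (g := fun ε => -2 * log (√(s / q) + √q * (q * ε)) / log 2)
    (by fun_prop) (by fun_prop (disch := positivity)) (by simp [logb]) hlower hδ
  refine ⟨ε, hε, fun Y _ W hW0 hW1 hin hout => abs_sub_lt_iff.2 ⟨?_, ?_⟩⟩
  · linarith [symCap_le_of_lt_Zd S hW0 hW1 hin]
  · linarith [le_symCap_of_Zd_lt S hW0 hW1 hε.le hout]
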